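/- The function g(θ) = √(b/(ωD)) tan(θ) − tanh(√(b/D)(θ/√ω − L)) is continuous and strictly monotone on (π/2, π) when L > π/√ω, and satisfies lim_{θ→(π/2)⁺} g(θ) = −∞ and g(π) > 0; hence g has exactly one zero in (π/2, π). -/

import Mathlib

/-!
With `c = √(b/(ωD))` one has `√(b/D) / √ω = c`, so `g θ = c tan θ - tanh (c θ + d)`. On `(π/2, π)`
the slope `c / cos² θ` of the first term exceeds `c`, which bounds the slope `c / cosh²` of the
second, so `g` is strictly increasing. As `θ → π/2⁺`, `tan θ → -∞` while `tanh` stays bounded; at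
`π`, `tan π = 0` and the argument of `tanh` is `√(b/D) (π/√ω - L) < 0`, so `g π > 0`. The
intermediate value theorem gives the zero.
-/

open Real Filter Topology Set

namespace Real

theorem hasDerivAt_tanh (x : ℝ) : HasDerivAt tanh (1 / cosh x ^ 2) x := by
  have h := (hasDerivAt_sinh x).div (hasDerivAt_cosh x) (cosh_pos x).ne'
  rw [show sinh / cosh = tanh from funext fun y => (tanh_eq_sinh_div_cosh y).symm] at h
  exact h.congr_deriv (by rw [← cosh_sq_sub_sinh_sq x]; ring)

theorem tanh_lt_zero {x : ℝ} (hx : x < 0) : tanh x < 0 := by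
  rw [tanh_eq_sinh_div_cosh]
  exact div_neg_of_neg_of_pos (sinh_neg_iff.2 hx) (cosh_pos x)

theorem one_div_cosh_sq_le_one (x : ℝ) : 1 / cosh x ^ 2 ≤ 1 :=
  div_le_one_of_le₀ (one_le_pow₀ (one_le_cosh x)) (by positivity)

theorem one_lt_one_div_cos_sq {θ : ℝ} (hcos : cos θ ≠ 0) (hsin : sin θ ≠ 0) :
    1 < 1 / cos θ ^ 2 := by
  have hcos_sq : 0 < cos θ ^ 2 := by positivity
  have hsin_sq : 0 < sin θ ^ 2 := by positivity
  rw [lt_one_div one_pos hcos_sq, div_one]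
  linarith [cos_sq_add_sin_sq θ]

theorem cos_ne_zero_of_mem_Ioc_pi_div_two_pi {θ : ℝ} (hθ : θ ∈ Ioc (π / 2) π) :
    cos θ ≠ 0 :=
  (cos_neg_of_pi_div_two_lt_of_lt hθ.1 (by linarith [hθ.2, pi_pos])).ne

theorem tendsto_tan_nhdsGT_pi_div_two : Tendsto tan (𝓝[>] (π / 2)) atBot := by
  have h := tendsto_tan_neg_pi_div_two
  rw [show -(π / 2) = π / 2 - π by ring, ← map_subRight_nhdsGT, tendsto_map'_iff] at h
  simpa only [Function.comp_def, tan_sub_pi] using h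

end Real

theorem existsUnique_zero_of_tendsto_atBot_of_pos {f : ℝ → ℝ} {a b : ℝ} (hab : a < b)
    (hcont : ContinuousOn f (Ioc a b)) (hmono : StrictMonoOn f (Ioo a b))
    (hbot : Tendsto f (𝓝[>] a) atBot) (hb : 0 < f b) :
    ∃! x, x ∈ Ioo a b ∧ f x = 0 := by
  obtain ⟨a', hfa', ha'⟩ :=
    ((hbot.eventually (eventually_lt_atBot 0)).and (Ioo_mem_nhdsGT hab)).exists
  obtain ⟨x, hx, hfx⟩ := intermediate_value_Icc ha'.2.le
    (hcont.mono (Icc_subset_Ioc ha'.1 le_rfl)) ⟨hfa'.le, hb.le⟩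
  have hxb : x ≠ b := by rintro rfl; linarith
  have hx_mem : x ∈ Ioo a b := ⟨ha'.1.trans_le hx.1, hx.2.lt_of_ne hxb⟩
  exact ⟨x, ⟨hx_mem, hfx⟩,
    fun y ⟨hy, hfy⟩ => hmono.injOn hy hx_mem (hfy.trans hfx.symm)⟩

section TanSubTanh

variable {c : ℝ} (d : ℝ)

theorem hasDerivAt_tan_sub_tanh {θ : ℝ} (hθ : cos θ ≠ 0) :
    HasDerivAt (fun x => c * tan x - tanh (c * x + d))
      (c * (1 / cos θ ^ 2 - 1 / cosh (c * θ + d) ^ 2)) θ := by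
  have hlin : HasDerivAt (fun x => c * x + d) c θ := by
    simpa using ((hasDerivAt_id θ).const_mul c).add_const d
  exact (((hasDerivAt_tan hθ).const_mul c).sub ((hasDerivAt_tanh _).comp θ hlin)).congr_deriv
    (by ring)

theorem continuousOn_tan_sub_tanh :
    ContinuousOn (fun x => c * tan x - tanh (c * x + d)) (Ioc (π / 2) π) := fun _ hθ =>
  (hasDerivAt_tan_sub_tanh d
    (cos_ne_zero_of_mem_Ioc_pi_div_two_pi hθ)).continuousAt.continuousWithinAt

theorem strictMonoOn_tan_sub_tanh (hc : 0 < c) :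
    StrictMonoOn (fun x => c * tan x - tanh (c * x + d)) (Ioo (π / 2) π) := by
  refine strictMonoOn_of_hasDerivWithinAt_pos (convex_Ioo _ _)
    (f' := fun θ => c * (1 / cos θ ^ 2 - 1 / cosh (c * θ + d) ^ 2))
    ((continuousOn_tan_sub_tanh d).mono Ioo_subset_Ioc_self)
    (fun θ hθ => ?_) (fun θ hθ => ?_)
  all_goals
    rw [interior_Ioo] at hθ
    have hθ_cos := cos_ne_zero_of_mem_Ioc_pi_div_two_pi (Ioo_subset_Ioc_self hθ)
  · exact (hasDerivAt_tan_sub_tanh d hθ_cos).hasDerivWithinAt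
  · have hcos := one_lt_one_div_cos_sq hθ_cos
      (sin_pos_of_pos_of_lt_pi (by linarith [hθ.1, pi_pos]) hθ.2).ne'
    have hcosh := one_div_cosh_sq_le_one (c * θ + d)
    exact mul_pos hc (by linarith)

theorem tendsto_tan_sub_tanh_nhdsGT_pi_div_two (hc : 0 < c) :
    Tendsto (fun x => c * tan x - tanh (c * x + d)) (𝓝[>] (π / 2)) atBot := by
  refine tendsto_atBot_mono (fun x => ?_)
    (tendsto_atBot_add_const_right _ 1 (tendsto_tan_nhdsGT_pi_div_two.const_mul_atBot hc))
  linarith [neg_one_lt_tanh (c * x + d)]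

end TanSubTanh

theorem stmt_15 (b D ω L : ℝ) (hb : 0 < b) (hD : 0 < D) (hω : 0 < ω)
    (hL : π / Real.sqrt ω < L)
    (g : ℝ → ℝ)
    (hg : ∀ θ : ℝ, g θ = Real.sqrt (b / (ω * D)) * Real.tan θ -
        Real.tanh (Real.sqrt (b / D) * (θ / Real.sqrt ω - L))) :
    ContinuousOn g (Set.Ioo (π / 2) π) ∧
    StrictMonoOn g (Set.Ioo (π / 2) π) ∧
    Filter.Tendsto g (nhdsWithin (π / 2) (Set.Ioi (π / 2))) Filter.atBot ∧
    0 < g π ∧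
    (∃! θ : ℝ, θ ∈ Set.Ioo (π / 2) π ∧ g θ = 0) := by
  have hc : 0 < √(b / (ω * D)) := by positivity
  have hgπ : 0 < g π := by
    rw [hg π, tan_pi, mul_zero, zero_sub, neg_pos]
    exact tanh_lt_zero (mul_neg_of_pos_of_neg (by positivity) (by linarith))
  have hg_eq : g = fun θ =>
      √(b / (ω * D)) * tan θ - tanh (√(b / (ω * D)) * θ + -(√(b / D) * L)) := by
    have hslope : √(b / D) / √ω = √(b / (ω * D)) := by
      rw [← sqrt_div (by positivity), div_div, mul_comm D]
    funext θ
    rw [hg θ, ← hslope]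
    congr 2
    ring
  subst hg_eq
  have hcont := continuousOn_tan_sub_tanh (c := √(b / (ω * D))) (-(√(b / D) * L))
  have hmono := strictMonoOn_tan_sub_tanh (-(√(b / D) * L)) hc
  exact ⟨hcont.mono Ioo_subset_Ioc_self, hmono,
    tendsto_tan_sub_tanh_nhdsGT_pi_div_two _ hc, hgπ,
    existsUnique_zero_of_tendsto_atBot_of_pos (by linarith [pi_pos]) hcont hmono
      (tendsto_tan_sub_tanh_nhdsGT_pi_div_two _ hc) hgπ⟩
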